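/- Let u : Ω → ℝⁿ be harmonic and conformal on an open subset Ω of ℂ, meaning u_{z z̄} = 0 and u_z · u_z = 0 where the dot is the ℂ-bilinear extension of the Euclidean inner product. Then the function z ↦ u_{zz}(z) · u_{zz}(z) is holomorphic on Ω. -/

import Mathlib

/-- The Wirtinger derivative `∂g/∂z = (g_x - i g_y)/2` of `g : ℂ → ℂ`,
viewed as a map of two real variables. -/
noncomputable def wirtD (g : ℂ → ℂ) (z : ℂ) : ℂ :=
  (fderiv ℝ g z 1 - Complex.I * fderiv ℝ g z Complex.I) / 2

/-- The conjugate Wirtinger derivative `∂g/∂z̄ = (g_x + i g_y)/2`. -/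
noncomputable def wirtDBar (g : ℂ → ℂ) (z : ℂ) : ℂ :=
  (fderiv ℝ g z 1 + Complex.I * fderiv ℝ g z Complex.I) / 2

lemma cr_holo {f : ℂ → ℂ} {z : ℂ} (hf : DifferentiableAt ℝ f z)
    (h : wirtDBar f z = 0) :
    DifferentiableAt ℂ f z ∧ wirtD f z = deriv f z := by
  set c := fderiv ℝ f z 1 with hc
  have h0 : c + Complex.I * fderiv ℝ f z Complex.I = 0 := by
    unfold wirtDBar at h
    field_simp at h
    linear_combination h
  have hb : fderiv ℝ f z Complex.I = Complex.I * c := by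
    have h1 : Complex.I * (c + Complex.I * fderiv ℝ f z Complex.I) = 0 := by
      rw [h0, mul_zero]
    have := Complex.I_sq
    linear_combination -h1 + fderiv ℝ f z Complex.I * this
  have hmap : ∀ w : ℂ, fderiv ℝ f z w = w * c := by
    intro w
    have hw : w = (w.re : ℝ) • (1 : ℂ) + (w.im : ℝ) • Complex.I := by
      simp [Complex.real_smul, Complex.re_add_im]
    rw [hw, map_add, map_smul, map_smul, hb]
    push_cast [Complex.real_smul]
    ring
  have hF : HasFDerivAt f (c • ContinuousLinearMap.id ℂ ℂ) z := by
    refine hasFDerivAt_of_restrictScalars ℝ hf.hasFDerivAt ?_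
    ext w
    simp [hmap w, mul_comm]
  have hdc : DifferentiableAt ℂ f z := hF.differentiableAt
  have hderiv : deriv f z = c := by
    have := hF.hasDerivAt
    simpa using this.deriv
  refine ⟨hdc, ?_⟩
  have hres := hdc.fderiv_restrictScalars ℝ
  unfold wirtD
  rw [hres]
  simp only [ContinuousLinearMap.coe_restrictScalars']
  have h1 : fderiv ℂ f z 1 = deriv f z := by simp [fderiv_apply_one_eq_deriv]
  have hI : fderiv ℂ f z Complex.I = Complex.I * deriv f z := by
    have : fderiv ℂ f z Complex.I = Complex.I • fderiv ℂ f z 1 := by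
      rw [← map_smul]; norm_num
    rw [this, h1]; simp
  rw [h1, hI]
  have := Complex.I_sq
  field_simp
  linear_combination -deriv f z * this

open scoped ContDiff

/-- If `u : Ω → ℝⁿ` is smooth, harmonic (`u_{z z̄} = 0`) and conformal
(`u_z · u_z = 0` for the ℂ-bilinear inner product), then `z ↦ u_{zz} · u_{zz}`
is holomorphic on `Ω`. -/
theorem stmt_10 {n : ℕ} (Ω : Set ℂ) (hΩ : IsOpen Ω)
    (u : ℂ → (Fin n → ℝ)) (hu : ContDiffOn ℝ (⊤ : ℕ∞) u Ω)
    (uz : Fin n → ℂ → ℂ)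
    (huz : ∀ i, uz i = wirtD (fun w => ((u w i : ℝ) : ℂ)))
    (hharm : ∀ z ∈ Ω, ∀ i, wirtDBar (uz i) z = 0)
    (hconf : ∀ z ∈ Ω, ∑ i, uz i z * uz i z = 0) :
    DifferentiableOn ℂ (fun z => ∑ i, wirtD (uz i) z * wirtD (uz i) z) Ω := by
  -- each uz i is real-differentiable on Ω
  have hsm : ∀ i, DifferentiableOn ℝ (uz i) Ω := by
    intro i
    have hg : ContDiffOn ℝ (∞ + 1) (fun w => ((u w i : ℝ) : ℂ)) Ω := by
      have : ContDiffOn ℝ (∞ + 1) (fun w => u w i) Ω :=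
        (ContinuousLinearMap.proj i).contDiff.comp_contDiffOn (hu.of_le (by simp))
      exact Complex.ofRealCLM.contDiff.comp_contDiffOn this
    have hfd : ContDiffOn ℝ ∞ (fderiv ℝ (fun w => ((u w i : ℝ) : ℂ))) Ω :=
      ((contDiffOn_succ_iff_fderiv_of_isOpen hΩ).mp hg).2.2
    have h1 : ContDiffOn ℝ ∞ (fun z => fderiv ℝ (fun w => ((u w i : ℝ) : ℂ)) z 1) Ω :=
      hfd.clm_apply contDiffOn_const
    have hI : ContDiffOn ℝ ∞ (fun z => fderiv ℝ (fun w => ((u w i : ℝ) : ℂ)) z Complex.I) Ω :=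
      hfd.clm_apply contDiffOn_const
    rw [huz i]
    have : ContDiffOn ℝ ∞ (wirtD (fun w => ((u w i : ℝ) : ℂ))) Ω := by
      unfold wirtD
      exact (h1.sub (contDiffOn_const.mul hI)).div_const 2
    exact this.differentiableOn (by simp)
  -- Cauchy–Riemann : uz i is holomorphic on Ω and wirtD = deriv there
  have hcr : ∀ i, ∀ z ∈ Ω, DifferentiableAt ℂ (uz i) z ∧ wirtD (uz i) z = deriv (uz i) z := by
    intro i z hz
    exact cr_holo ((hsm i z hz).differentiableAt (hΩ.mem_nhds hz)) (hharm z hz i)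
  have hholo : ∀ i, DifferentiableOn ℂ (uz i) Ω := fun i z hz =>
    ((hcr i z hz).1).differentiableWithinAt
  -- deriv (uz i) is holomorphic on Ω
  have hderiv : ∀ i, DifferentiableOn ℂ (deriv (uz i)) Ω := fun i =>
    (((hholo i).analyticOnNhd hΩ).deriv).differentiableOn
  have : DifferentiableOn ℂ (fun z => ∑ i, deriv (uz i) z * deriv (uz i) z) Ω := by
    apply DifferentiableOn.fun_sum
    intro i _
    exact (hderiv i).mul (hderiv i)
  exact this.congr fun z hz =>
    Finset.sum_congr rfl fun i _ => by rw [(hcr i z hz).2]
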